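/- Let G be a group generated by a finite set S, with word metric d_S, acting by isometries on a proper metric space (X,d). Fix a basepoint x₀ ∈ X and let π : G → X be the orbit map π(g) = g·x₀. Let H ⊆ G be a subset such that π restricted to H is proper (for every bounded set W ⊆ X, the set {h ∈ H : π(h) ∈ W} is finite), and suppose the action of G on X is acylindrical along π(H). Then for every x ∈ H and every r ≥ 0 there exists R ≥ 0 such that for every D ≥ 0 there exists B ≥ 0, not depending on y, such that for every y ∈ H with d(π(x), π(y)) ≥ R one has N_D(π⁻¹(B_r(π(x)))) ∩ π⁻¹(B_r(π(y))) ⊆ N_B(H), where the neighbourhoods N_D and N_B are taken with respect to d_S and B_r(·) denotes the closed ball of radius r in X. -/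

import Mathlib

/-!
Fix `x ∈ H` and `r`, and take `R` from acylindricity for `2r`. If `g, g₀` both move a point
`p` into `B_r(a)` and a point `q` into `B_r(b)`, then `g g₀⁻¹` moves `a` and `b` by at most
`2r`; so acylindricity makes the set of such `g` finite. Given `D`, write `p = g u` with `u` in
the `D`-ball of the word metric, which is finite. Then `π y` lies within `2r + C` of `π x`,
where `C` bounds `d(x₀, u x₀)` on that ball, so by properness of `π` on `H` only finitely many
`y` occur, and for each `y` and `u` only finitely many `g`. The word distance `d_S(g, y)`
therefore takes finitely many values, and `B` is their maximum.
-/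

/-- The word metric on a group `G` with respect to a generating set `Y`:
`wordDist Y g h` is the least length of a word in `Y ∪ Y⁻¹` representing `g⁻¹ * h`. -/
noncomputable def wordDist {G : Type*} [Group G] (Y : Set G) (g h : G) : ℕ :=
  sInf {n : ℕ | ∃ w : List G, w.length = n ∧ (∀ t ∈ w, t ∈ Y ∪ Y⁻¹) ∧ w.prod = g⁻¹ * h}

section WordMetric

variable {G : Type*} [Group G]

lemma wordDist_eq_wordDist_one (Y : Set G) (g h : G) :
    wordDist Y g h = wordDist Y 1 (g⁻¹ * h) := by
  simp [wordDist]

lemma exists_word_length_eq_wordDist {Y : Set G} (hY : Subgroup.closure Y = ⊤) (g : G) :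
    ∃ w : List G, w.length = wordDist Y 1 g ∧ (∀ t ∈ w, t ∈ Y ∪ Y⁻¹) ∧ w.prod = g := by
  have hg : g ∈ Submonoid.closure (Y ∪ Y⁻¹) := by
    rw [← Subgroup.closure_toSubmonoid, hY]
    trivial
  obtain ⟨w, hwY, hwg⟩ := Submonoid.exists_list_of_mem_closure hg
  simp only [wordDist, inv_one, one_mul]
  exact Nat.sInf_mem (s := {n | ∃ w : List G, w.length = n ∧ (∀ t ∈ w, t ∈ Y ∪ Y⁻¹) ∧
    w.prod = g}) ⟨w.length, w, rfl, hwY, hwg⟩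

lemma finite_setOf_wordDist_one_le {Y : Set G} (hYfin : Y.Finite)
    (hY : Subgroup.closure Y = ⊤) (n : ℕ) : {g : G | wordDist Y 1 g ≤ n}.Finite := by
  have : Finite ↥(Y ∪ Y⁻¹) := (hYfin.union hYfin.inv).to_subtype
  refine ((List.finite_length_le ↥(Y ∪ Y⁻¹) n).image
    fun l => (l.map Subtype.val).prod).subset ?_
  intro g hg
  obtain ⟨w, hwlen, hwY, rfl⟩ := exists_word_length_eq_wordDist hY g
  have hlen : w.length ≤ n := hwlen ▸ hg
  lift w to List ↥(Y ∪ Y⁻¹) using hwY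
  exact ⟨w, by simpa using hlen, rfl⟩

end WordMetric

section Acylindricity

variable {G X : Type*} [Group G] [PseudoMetricSpace X] [MulAction G X] [IsIsometricSMul G X]

lemma dist_mul_inv_smul_le (g g₀ : G) (p a : X) :
    dist a ((g * g₀⁻¹) • a) ≤ dist (g • p) a + dist (g₀ • p) a :=
  calc dist a ((g * g₀⁻¹) • a)
      ≤ dist a (g • p) + dist (g • p) ((g * g₀⁻¹) • a) := dist_triangle _ _ _
    _ = dist (g • p) a + dist (g₀ • p) a := by
      rw [dist_comm a, show g • p = (g * g₀⁻¹) • g₀ • p by simp [mul_smul], dist_smul]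

lemma finite_setOf_dist_smul_le {a b : X} {r : ℝ}
    (hfin : {k : G | dist a (k • a) ≤ 2 * r ∧ dist b (k • b) ≤ 2 * r}.Finite) (p q : X) :
    {g : G | dist (g • p) a ≤ r ∧ dist (g • q) b ≤ r}.Finite := by
  rcases Set.eq_empty_or_nonempty {g : G | dist (g • p) a ≤ r ∧ dist (g • q) b ≤ r} with
    hempty | ⟨g₀, hg₀p, hg₀q⟩
  · simp [hempty]
  refine (hfin.image (· * g₀)).subset fun g ⟨hgp, hgq⟩ => ⟨g * g₀⁻¹, ⟨?_, ?_⟩, by simp⟩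
  · linarith [dist_mul_inv_smul_le g g₀ p a]
  · linarith [dist_mul_inv_smul_le g g₀ q b]

lemma finite_setOf_pairs_near_fibres {x₀ a : X} {H : Set G} {r R : ℝ}
    (hproper : ∀ W : Set X, Bornology.IsBounded W → {h : G | h ∈ H ∧ h • x₀ ∈ W}.Finite)
    (hacyl : ∀ y ∈ H, R ≤ dist a (y • x₀) →
      {k : G | dist a (k • a) ≤ 2 * r ∧ dist (y • x₀) (k • y • x₀) ≤ 2 * r}.Finite)
    {K : Set G} (hK : K.Finite) :
    {q : G × G | q.2 ∈ H ∧ R ≤ dist a (q.2 • x₀) ∧ dist (q.1 • x₀) (q.2 • x₀) ≤ r ∧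
      ∃ u ∈ K, dist ((q.1 * u) • x₀) a ≤ r}.Finite := by
  obtain ⟨C, hC⟩ := (hK.image fun u => dist x₀ (u • x₀)).bddAbove
  have hY : {y : G | (y ∈ H ∧ R ≤ dist a (y • x₀)) ∧
      y • x₀ ∈ Metric.closedBall a (2 * r + C)}.Finite :=
    (hproper _ Metric.isBounded_closedBall).subset fun y hy => ⟨hy.1.1, hy.2⟩
  refine (hY.biUnion fun y hy => hK.biUnion fun u _ =>
    (finite_setOf_dist_smul_le (hacyl y hy.1.1 hy.1.2) (u • x₀) x₀).prod
      (Set.finite_singleton y)).subset ?_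
  rintro ⟨g, y⟩ ⟨hy, hRy, hgy, u, hu, hgu⟩
  rw [mul_smul] at hgu
  have hya : dist (y • x₀) a ≤ 2 * r + C :=
    calc dist (y • x₀) a
        ≤ dist (y • x₀) (g • x₀) + dist (g • x₀) (g • u • x₀) + dist (g • u • x₀) a :=
          dist_triangle4 _ _ _ _
      _ ≤ r + C + r := by
          gcongr
          · rwa [dist_comm]
          · rw [dist_smul]; exact hC ⟨u, hu, rfl⟩
      _ = 2 * r + C := by ring
  simp only [Set.mem_iUnion, Set.mem_prod, Set.mem_singleton_iff]
  exact ⟨y, ⟨⟨hy, hRy⟩, hya⟩, u, hu, ⟨hgu, hgy⟩, rfl⟩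

end Acylindricity

theorem fibre_intersection_near_H_general
    {G X : Type*} [Group G] [MetricSpace X] [MulAction G X]
    (hiso : ∀ (g : G) (x y : X), dist (g • x) (g • y) = dist x y)
    (S : Finset G) (hS : Subgroup.closure (S : Set G) = ⊤)
    (x₀ : X) (H : Set G)
    (hproper : ∀ W : Set X, Bornology.IsBounded W → {h : G | h ∈ H ∧ h • x₀ ∈ W}.Finite)
    (hacyl : ∀ r : ℝ, 0 ≤ r → ∃ R : ℝ, 0 ≤ R ∧
      ∀ x ∈ (fun g : G => g • x₀) '' H, ∀ y ∈ (fun g : G => g • x₀) '' H, R ≤ dist x y →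
        {g : G | dist x (g • x) ≤ r ∧ dist y (g • y) ≤ r}.Finite) :
    ∀ x ∈ H, ∀ r : ℝ, 0 ≤ r → ∃ R : ℝ, 0 ≤ R ∧ ∀ D : ℝ, 0 ≤ D → ∃ B : ℝ, 0 ≤ B ∧
      ∀ y ∈ H, R ≤ dist (x • x₀) (y • x₀) →
        ∀ g : G,
          (∃ p : G, dist (p • x₀) (x • x₀) ≤ r ∧ (wordDist (S : Set G) g p : ℝ) ≤ D) →
          dist (g • x₀) (y • x₀) ≤ r →
          ∃ h ∈ H, (wordDist (S : Set G) g h : ℝ) ≤ B := by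
  intro x hx r hr
  have : IsIsometricSMul G X := ⟨fun g => Isometry.of_dist_eq (hiso g)⟩
  obtain ⟨R, hR0, hRfin⟩ := hacyl (2 * r) (by positivity)
  refine ⟨R, hR0, fun D _ => ?_⟩
  have hpairs := finite_setOf_pairs_near_fibres hproper
    (fun y hy hRy => hRfin _ ⟨x, hx, rfl⟩ _ ⟨y, hy, rfl⟩ hRy)
    (finite_setOf_wordDist_one_le S.finite_toSet hS ⌊D⌋₊)
  obtain ⟨B, hB⟩ := (hpairs.image fun q => (wordDist (S : Set G) q.1 q.2 : ℝ)).bddAbove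
  refine ⟨max B 0, le_max_right _ _, ?_⟩
  rintro y hy hRy g ⟨p, hpx, hgp⟩ hgy
  have hu : wordDist (S : Set G) 1 (g⁻¹ * p) ≤ ⌊D⌋₊ := by
    rw [← wordDist_eq_wordDist_one]
    exact Nat.le_floor hgp
  exact ⟨y, hy, le_max_of_le_left
    (hB ⟨(g, y), ⟨hy, hRy, hgy, g⁻¹ * p, hu, by simpa using hpx⟩, rfl⟩)⟩

/-- a finitely generated group `G` acts by isometries on a proper metric space
`X`, `H ⊆ G` is such that the orbit map is proper on `H` and the action is acylindrical
along `π(H)`. Then for every `x ∈ H` and `r ≥ 0` there is `R ≥ 0` such that for every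
`D ≥ 0` there is `B ≥ 0` (independent of `y`) with
`N_D(π⁻¹(B_r(π x))) ∩ π⁻¹(B_r(π y)) ⊆ N_B(H)` whenever `y ∈ H` and `d(π x, π y) ≥ R`. -/
theorem fibre_intersection_near_H
    {G X : Type*} [Group G] [MetricSpace X] [ProperSpace X] [MulAction G X]
    (hiso : ∀ (g : G) (x y : X), dist (g • x) (g • y) = dist x y)
    (S : Finset G) (hS : Subgroup.closure (S : Set G) = ⊤)
    (x₀ : X) (H : Set G)
    (hproper : ∀ W : Set X, Bornology.IsBounded W → {h : G | h ∈ H ∧ h • x₀ ∈ W}.Finite)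
    (hacyl : ∀ r : ℝ, 0 ≤ r → ∃ R : ℝ, 0 ≤ R ∧
      ∀ x ∈ (fun g : G => g • x₀) '' H, ∀ y ∈ (fun g : G => g • x₀) '' H, R ≤ dist x y →
        {g : G | dist x (g • x) ≤ r ∧ dist y (g • y) ≤ r}.Finite) :
    ∀ x ∈ H, ∀ r : ℝ, 0 ≤ r → ∃ R : ℝ, 0 ≤ R ∧ ∀ D : ℝ, 0 ≤ D → ∃ B : ℝ, 0 ≤ B ∧
      ∀ y ∈ H, R ≤ dist (x • x₀) (y • x₀) →
        ∀ g : G,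
          (∃ p : G, dist (p • x₀) (x • x₀) ≤ r ∧ (wordDist (S : Set G) g p : ℝ) ≤ D) →
          dist (g • x₀) (y • x₀) ≤ r →
          ∃ h ∈ H, (wordDist (S : Set G) g h : ℝ) ≤ B :=
  fibre_intersection_near_H_general hiso S hS x₀ H hproper hacyl
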